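/- Let g be a Kähler metric near 0 ∈ ℂⁿ in holomorphic normal coordinates z (so g_{i\bar j}(0) = δ_{ij} and all first derivatives of g_{i\bar j} vanish at 0). If for all indices α, β, γ, δ, ε the symmetrized third derivatives satisfy (∂_{γ\bar δε} g^{α\bar β} + ∂_{α\bar δε} g^{γ\bar β} + ∂_{α\bar δγ} g^{ε\bar β} + ∂_{γ\bar βε} g^{α\bar δ} + ∂_{α\bar βε} g^{γ\bar δ} + ∂_{α\bar βγ} g^{ε\bar δ})(0) = 0, then all third derivatives ∂³g_{α\bar β}/∂z_γ∂\bar z_δ∂z_ε (0) = 0. -/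

import Mathlib

open scoped ComplexOrder

/-- The Wirtinger derivative `∂/∂w_i` of a function on `ℂⁿ`. -/
noncomputable def dz {n : ℕ} (i : Fin n) (f : (Fin n → ℂ) → ℂ) : (Fin n → ℂ) → ℂ :=
  fun z => (fderiv ℝ f z (Pi.single i 1) - Complex.I * fderiv ℝ f z (Pi.single i Complex.I)) / 2

/-- The Wirtinger derivative `∂/∂\bar w_i` of a function on `ℂⁿ`. -/
noncomputable def dzbar {n : ℕ} (i : Fin n) (f : (Fin n → ℂ) → ℂ) : (Fin n → ℂ) → ℂ :=
  fun z => (fderiv ℝ f z (Pi.single i 1) + Complex.I * fderiv ℝ f z (Pi.single i Complex.I)) / 2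

/-- The complex Euclidean Laplacian `Δ_c = ∑ i, ∂²/(∂w_i ∂\bar w_i)`. -/
noncomputable def lapC {n : ℕ} (f : (Fin n → ℂ) → ℂ) : (Fin n → ℂ) → ℂ :=
  fun z => ∑ i, dzbar i (dz i f) z

/-- The Kähler Laplacian `Δ = ∑ g^{i \bar j} ∂²/(∂w_j ∂\bar w_i)` associated to a metric
`g` (given as a matrix-valued function, `g w i j = g_{i \bar j}(w)`). -/
noncomputable def kLapG {n : ℕ} (g : (Fin n → ℂ) → Matrix (Fin n) (Fin n) ℂ)
    (f : (Fin n → ℂ) → ℂ) : (Fin n → ℂ) → ℂ :=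
  fun z => ∑ i, ∑ j, ((g z)⁻¹ i j) * dzbar i (dz j f) z

open scoped ContDiff

section Aux

variable {n : ℕ}

private lemma two_le_inf : (2 : WithTop ℕ∞) ≤ ∞ := by
  rw [show ((2:WithTop ℕ∞)) = ((2:ℕ∞):WithTop ℕ∞) by norm_cast]
  exact WithTop.coe_le_coe.2 le_top

private lemma one_le_inf : (1 : WithTop ℕ∞) ≤ ∞ :=
  le_trans (by norm_num) two_le_inf

private lemma inf_add_one_le : (∞ + 1 : WithTop ℕ∞) ≤ ∞ := by
  rw [show ((⊤:ℕ∞):WithTop ℕ∞) + 1 = (((⊤:ℕ∞) + 1 : ℕ∞):WithTop ℕ∞) by norm_cast]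
  rw [show ((⊤:ℕ∞) + 1 : ℕ∞) = (⊤:ℕ∞) by simp]

private lemma sdAt {f : (Fin n → ℂ) → ℂ} (h : ContDiff ℝ ∞ f) (z : Fin n → ℂ) :
    DifferentiableAt ℝ f z := (h.differentiable (by simp)).differentiableAt

private lemma smooth_fderiv_apply {f : (Fin n → ℂ) → ℂ} (hf : ContDiff ℝ ∞ f)
    (v : Fin n → ℂ) : ContDiff ℝ ∞ fun z => fderiv ℝ f z v :=
  (hf.fderiv_right inf_add_one_le).clm_apply contDiff_const

private lemma smooth_dz (i : Fin n) {f : (Fin n → ℂ) → ℂ} (hf : ContDiff ℝ ∞ f) :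
    ContDiff ℝ ∞ (dz i f) := by
  unfold dz
  exact ((smooth_fderiv_apply hf _).sub
    (contDiff_const.mul (smooth_fderiv_apply hf _))).div_const 2

private lemma smooth_dzbar (i : Fin n) {f : (Fin n → ℂ) → ℂ} (hf : ContDiff ℝ ∞ f) :
    ContDiff ℝ ∞ (dzbar i f) := by
  unfold dzbar
  exact ((smooth_fderiv_apply hf _).add
    (contDiff_const.mul (smooth_fderiv_apply hf _))).div_const 2

private lemma dz_mul (i : Fin n) {f g : (Fin n → ℂ) → ℂ} (hf : ContDiff ℝ ∞ f)
    (hg : ContDiff ℝ ∞ g) (z : Fin n → ℂ) :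
    dz i (fun w => f w * g w) z = dz i f z * g z + f z * dz i g z := by
  simp only [dz, fderiv_fun_mul (sdAt hf z) (sdAt hg z), ContinuousLinearMap.add_apply,
    ContinuousLinearMap.smul_apply, smul_eq_mul]
  ring

private lemma dzbar_mul (i : Fin n) {f g : (Fin n → ℂ) → ℂ} (hf : ContDiff ℝ ∞ f)
    (hg : ContDiff ℝ ∞ g) (z : Fin n → ℂ) :
    dzbar i (fun w => f w * g w) z = dzbar i f z * g z + f z * dzbar i g z := by
  simp only [dzbar, fderiv_fun_mul (sdAt hf z) (sdAt hg z), ContinuousLinearMap.add_apply,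
    ContinuousLinearMap.smul_apply, smul_eq_mul]
  ring

private lemma dz_add (i : Fin n) {f g : (Fin n → ℂ) → ℂ} (hf : ContDiff ℝ ∞ f)
    (hg : ContDiff ℝ ∞ g) (z : Fin n → ℂ) :
    dz i (fun w => f w + g w) z = dz i f z + dz i g z := by
  simp only [dz, fderiv_fun_add (sdAt hf z) (sdAt hg z), ContinuousLinearMap.add_apply]
  ring

private lemma dzbar_add (i : Fin n) {f g : (Fin n → ℂ) → ℂ} (hf : ContDiff ℝ ∞ f)
    (hg : ContDiff ℝ ∞ g) (z : Fin n → ℂ) :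
    dzbar i (fun w => f w + g w) z = dzbar i f z + dzbar i g z := by
  simp only [dzbar, fderiv_fun_add (sdAt hf z) (sdAt hg z), ContinuousLinearMap.add_apply]
  ring

private lemma dz_sum {ι : Type*} (i : Fin n) (s : Finset ι) {F : ι → (Fin n → ℂ) → ℂ}
    (hF : ∀ k ∈ s, ContDiff ℝ ∞ (F k)) (z : Fin n → ℂ) :
    dz i (fun w => ∑ k ∈ s, F k w) z = ∑ k ∈ s, dz i (F k) z := by
  simp only [dz, fderiv_fun_sum (fun k hk => sdAt (hF k hk) z), ContinuousLinearMap.sum_apply,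
    Finset.mul_sum]
  rw [← Finset.sum_sub_distrib, Finset.sum_div]

private lemma dzbar_sum {ι : Type*} (i : Fin n) (s : Finset ι) {F : ι → (Fin n → ℂ) → ℂ}
    (hF : ∀ k ∈ s, ContDiff ℝ ∞ (F k)) (z : Fin n → ℂ) :
    dzbar i (fun w => ∑ k ∈ s, F k w) z = ∑ k ∈ s, dzbar i (F k) z := by
  simp only [dzbar, fderiv_fun_sum (fun k hk => sdAt (hF k hk) z), ContinuousLinearMap.sum_apply,
    Finset.mul_sum]
  rw [← Finset.sum_add_distrib, Finset.sum_div]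

private lemma dz_const (i : Fin n) (c : ℂ) : dz i (fun _ : Fin n → ℂ => c) = fun _ => 0 := by
  funext z
  simp [dz, fderiv_const_apply]

private lemma dzbar_const (i : Fin n) (c : ℂ) :
    dzbar i (fun _ : Fin n → ℂ => c) = fun _ => 0 := by
  funext z
  simp [dzbar, fderiv_const_apply]

private lemma fderiv_conj_apply {f : (Fin n → ℂ) → ℂ} (hf : ContDiff ℝ ∞ f)
    (z v : Fin n → ℂ) :
    fderiv ℝ (fun w => (starRingEnd ℂ) (f w)) z v = (starRingEnd ℂ) (fderiv ℝ f z v) := by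
  have h : HasFDerivAt (fun w => (starRingEnd ℂ) (f w))
      ((Complex.conjCLE.toContinuousLinearMap).comp (fderiv ℝ f z)) z := by
    exact (Complex.conjCLE.toContinuousLinearMap.hasFDerivAt.comp z (sdAt hf z).hasFDerivAt)
  rw [h.fderiv]
  simp

private lemma dzbar_conj (i : Fin n) {f : (Fin n → ℂ) → ℂ} (hf : ContDiff ℝ ∞ f)
    (z : Fin n → ℂ) :
    dzbar i (fun w => (starRingEnd ℂ) (f w)) z = (starRingEnd ℂ) (dz i f z) := by
  simp only [dzbar, dz, fderiv_conj_apply hf, map_div₀, map_sub, map_mul, Complex.conj_I,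
    map_ofNat]
  ring

private lemma fderiv_swap {f : (Fin n → ℂ) → ℂ} (hf : ContDiff ℝ ∞ f) (z u v : Fin n → ℂ) :
    fderiv ℝ (fun y => fderiv ℝ f y u) z v = fderiv ℝ (fun y => fderiv ℝ f y v) z u := by
  have hd : DifferentiableAt ℝ (fderiv ℝ f) z :=
    ((hf.fderiv_right inf_add_one_le).differentiable (by simp)).differentiableAt
  have h1 : ∀ u v : Fin n → ℂ, fderiv ℝ (fun y => fderiv ℝ f y u) z v
      = fderiv ℝ (fderiv ℝ f) z v u := by
    intro u v
    rw [fderiv_clm_apply hd (differentiableAt_const u)]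
    simp
  rw [h1, h1]
  exact (hf.contDiffAt.isSymmSndFDerivAt (by simpa using two_le_inf)) v u

private lemma fderiv_dz_apply (b : Fin n) {f : (Fin n → ℂ) → ℂ} (hf : ContDiff ℝ ∞ f)
    (z w : Fin n → ℂ) :
    fderiv ℝ (dz b f) z w =
      (fderiv ℝ (fun y => fderiv ℝ f y (Pi.single b 1)) z w
        - Complex.I * fderiv ℝ (fun y => fderiv ℝ f y (Pi.single b Complex.I)) z w) / 2 := by
  have hA := smooth_fderiv_apply hf (Pi.single b 1)
  have hB := smooth_fderiv_apply hf (Pi.single b Complex.I)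
  have h : dz b f = fun y => (2⁻¹ : ℂ) *
      (fderiv ℝ f y (Pi.single b 1) - Complex.I * fderiv ℝ f y (Pi.single b Complex.I)) := by
    funext y; simp only [dz]; ring
  rw [h, fderiv_const_mul (((sdAt hA z)).fun_sub ((sdAt hB z).const_mul _)),
    fderiv_fun_sub (sdAt hA z) ((sdAt hB z).const_mul _), fderiv_const_mul (sdAt hB z)]
  simp only [ContinuousLinearMap.smul_apply, ContinuousLinearMap.sub_apply, smul_eq_mul]
  ring

private lemma fderiv_dzbar_apply (b : Fin n) {f : (Fin n → ℂ) → ℂ} (hf : ContDiff ℝ ∞ f)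
    (z w : Fin n → ℂ) :
    fderiv ℝ (dzbar b f) z w =
      (fderiv ℝ (fun y => fderiv ℝ f y (Pi.single b 1)) z w
        + Complex.I * fderiv ℝ (fun y => fderiv ℝ f y (Pi.single b Complex.I)) z w) / 2 := by
  have hA := smooth_fderiv_apply hf (Pi.single b 1)
  have hB := smooth_fderiv_apply hf (Pi.single b Complex.I)
  have h : dzbar b f = fun y => (2⁻¹ : ℂ) *
      (fderiv ℝ f y (Pi.single b 1) + Complex.I * fderiv ℝ f y (Pi.single b Complex.I)) := by
    funext y; simp only [dzbar]; ring
  rw [h, fderiv_const_mul (((sdAt hA z)).fun_add ((sdAt hB z).const_mul _)),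
    fderiv_fun_add (sdAt hA z) ((sdAt hB z).const_mul _), fderiv_const_mul (sdAt hB z)]
  simp only [ContinuousLinearMap.smul_apply, ContinuousLinearMap.add_apply, smul_eq_mul]
  ring

private lemma dz_dzbar_comm (a b : Fin n) (f : (Fin n → ℂ) → ℂ) (hf : ContDiff ℝ ∞ f) :
    dz a (dzbar b f) = dzbar b (dz a f) := by
  funext z
  simp only [dz, dzbar]
  rw [fderiv_dzbar_apply b hf, fderiv_dzbar_apply b hf, fderiv_dz_apply a hf,
    fderiv_dz_apply a hf]
  rw [fderiv_swap hf z (Pi.single a 1) (Pi.single b 1),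
    fderiv_swap hf z (Pi.single a 1) (Pi.single b Complex.I),
    fderiv_swap hf z (Pi.single a Complex.I) (Pi.single b 1),
    fderiv_swap hf z (Pi.single a Complex.I) (Pi.single b Complex.I)]
  ring

private lemma dz_dz_comm (a b : Fin n) (f : (Fin n → ℂ) → ℂ) (hf : ContDiff ℝ ∞ f) :
    dz a (dz b f) = dz b (dz a f) := by
  funext z
  simp only [dz]
  rw [fderiv_dz_apply b hf, fderiv_dz_apply b hf, fderiv_dz_apply a hf, fderiv_dz_apply a hf]
  rw [fderiv_swap hf z (Pi.single a 1) (Pi.single b 1),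
    fderiv_swap hf z (Pi.single a 1) (Pi.single b Complex.I),
    fderiv_swap hf z (Pi.single a Complex.I) (Pi.single b 1),
    fderiv_swap hf z (Pi.single a Complex.I) (Pi.single b Complex.I)]
  ring


private lemma triple_const (c d e : Fin n) (k : ℂ) :
    dz c (dzbar d (dz e (fun _ : Fin n → ℂ => k))) = fun _ => 0 := by
  rw [dz_const e k, dzbar_const d 0, dz_const c 0]

private lemma triple_sum {ι : Type*} (c d e : Fin n) (s : Finset ι)
    {F : ι → (Fin n → ℂ) → ℂ} (hF : ∀ k ∈ s, ContDiff ℝ ∞ (F k)) (z : Fin n → ℂ) :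
    dz c (dzbar d (dz e (fun w => ∑ k ∈ s, F k w))) z
      = ∑ k ∈ s, dz c (dzbar d (dz e (F k))) z := by
  have h1 : dz e (fun w => ∑ k ∈ s, F k w) = fun w => ∑ k ∈ s, dz e (F k) w :=
    funext fun w => dz_sum e s hF w
  rw [h1]
  have h2 : dzbar d (fun w => ∑ k ∈ s, dz e (F k) w)
      = fun w => ∑ k ∈ s, dzbar d (dz e (F k)) w :=
    funext fun w => dzbar_sum d s (fun k hk => smooth_dz e (hF k hk)) w
  rw [h2]
  exact dz_sum c s (fun k hk => smooth_dzbar d (smooth_dz e (hF k hk))) z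

private lemma triple_mul (c d e : Fin n) {f g : (Fin n → ℂ) → ℂ}
    (hf : ContDiff ℝ ∞ f) (hg : ContDiff ℝ ∞ g) (z : Fin n → ℂ) :
    dz c (dzbar d (dz e (fun w => f w * g w))) z =
      dz c (dzbar d (dz e f)) z * g z
      + dzbar d (dz e f) z * dz c g z
      + dz c (dz e f) z * dzbar d g z
      + dz e f z * dz c (dzbar d g) z
      + dz c (dzbar d f) z * dz e g z
      + dzbar d f z * dz c (dz e g) z
      + dz c f z * dzbar d (dz e g) z
      + f z * dz c (dzbar d (dz e g)) z := by
  have h1 : dz e (fun w => f w * g w) = fun w => dz e f w * g w + f w * dz e g w :=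
    funext fun w => dz_mul e hf hg w
  rw [h1]
  have h2 : dzbar d (fun w => dz e f w * g w + f w * dz e g w) = fun w =>
      dzbar d (dz e f) w * g w + dz e f w * dzbar d g w
      + (dzbar d f w * dz e g w + f w * dzbar d (dz e g) w) := by
    funext w
    rw [dzbar_add d ((smooth_dz e hf).mul hg) (hf.mul (smooth_dz e hg)) w,
      dzbar_mul d (smooth_dz e hf) hg w, dzbar_mul d hf (smooth_dz e hg) w]
  rw [h2]
  have s1 : ContDiff ℝ ∞ fun w => dzbar d (dz e f) w * g w + dz e f w * dzbar d g w :=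
    ((smooth_dzbar d (smooth_dz e hf)).mul hg).add ((smooth_dz e hf).mul (smooth_dzbar d hg))
  have s2 : ContDiff ℝ ∞ fun w => dzbar d f w * dz e g w + f w * dzbar d (dz e g) w :=
    ((smooth_dzbar d hf).mul (smooth_dz e hg)).add (hf.mul (smooth_dzbar d (smooth_dz e hg)))
  rw [dz_add c s1 s2 z,
    dz_add c ((smooth_dzbar d (smooth_dz e hf)).mul hg)
      ((smooth_dz e hf).mul (smooth_dzbar d hg)) z,
    dz_add c ((smooth_dzbar d hf).mul (smooth_dz e hg))
      (hf.mul (smooth_dzbar d (smooth_dz e hg))) z,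
    dz_mul c (smooth_dzbar d (smooth_dz e hf)) hg z,
    dz_mul c (smooth_dz e hf) (smooth_dzbar d hg) z,
    dz_mul c (smooth_dzbar d hf) (smooth_dz e hg) z,
    dz_mul c hf (smooth_dzbar d (smooth_dz e hg)) z]
  ring

private lemma smooth_det {A : (Fin n → ℂ) → Matrix (Fin n) (Fin n) ℂ}
    (hA : ∀ i j, ContDiff ℝ ∞ fun w => A w i j) :
    ContDiff ℝ ∞ fun w => (A w).det := by
  simp only [Matrix.det_apply']
  exact ContDiff.sum fun σ _ =>
    contDiff_const.mul (contDiff_prod fun i _ => hA (σ i) i)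

private lemma smooth_inv_entry {g : (Fin n → ℂ) → Matrix (Fin n) (Fin n) ℂ}
    (hsm : ∀ i j, ContDiff ℝ ∞ fun w => g w i j)
    (hdet : ∀ w, (g w).det ≠ 0) (i j : Fin n) :
    ContDiff ℝ ∞ fun w => (g w)⁻¹ i j := by
  have h : (fun w => (g w)⁻¹ i j)
      = fun w => ((g w).det)⁻¹ * (g w).adjugate i j := by
    funext w
    rw [Matrix.inv_def, Matrix.smul_apply, Ring.inverse_eq_inv', smul_eq_mul]
  rw [h]
  refine ((smooth_det hsm).inv hdet).mul ?_
  have h2 : (fun w => (g w).adjugate i j)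
      = fun w => ((g w).updateRow j (Pi.single i 1)).det := by
    funext w; rw [Matrix.adjugate_apply]
  rw [h2]
  apply smooth_det
  intro a b
  by_cases hab : a = j
  · simp only [Matrix.updateRow_apply, hab, if_pos rfl]
    exact contDiff_const
  · simp only [Matrix.updateRow_apply, if_neg hab]
    exact hsm a b

end Aux

/-- for a Kähler metric in holomorphic normal coordinates at `0`
(`g_{i \bar j}(0) = δ_{ij}`, first derivatives vanishing at `0`), if the symmetrized third
derivatives of the inverse metric vanish at `0`, then all third derivatives
`∂³g_{α \bar β}/∂z_γ ∂\bar z_δ ∂z_ε(0)` vanish. -/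
theorem third_deriv_metric_vanish (n : ℕ)
    (g : (Fin n → ℂ) → Matrix (Fin n) (Fin n) ℂ)
    (hsm : ∀ i j, ContDiff ℝ (⊤ : ℕ∞) (fun w => g w i j))
    (hpos : ∀ w, (g w).PosDef)
    (hkahler : ∀ w i j k, dz k (fun w' => g w' i j) w = dz i (fun w' => g w' k j) w)
    (hnorm0 : g 0 = 1)
    (hnorm1 : ∀ i j k, dz k (fun w => g w i j) 0 = 0)
    (hnorm1' : ∀ i j k, dzbar k (fun w => g w i j) 0 = 0)
    (hsymm : ∀ α β γ δ ε : Fin n,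
      dz γ (dzbar δ (dz ε (fun w => (g w)⁻¹ α β))) 0 +
      dz α (dzbar δ (dz ε (fun w => (g w)⁻¹ γ β))) 0 +
      dz α (dzbar δ (dz γ (fun w => (g w)⁻¹ ε β))) 0 +
      dz γ (dzbar β (dz ε (fun w => (g w)⁻¹ α δ))) 0 +
      dz α (dzbar β (dz ε (fun w => (g w)⁻¹ γ δ))) 0 +
      dz α (dzbar β (dz γ (fun w => (g w)⁻¹ ε δ))) 0 = 0) :
    ∀ α β γ δ ε : Fin n, dz γ (dzbar δ (dz ε (fun w => g w α β))) 0 = 0 := by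
  intro α β γ δ ε
  classical
  have hsm' : ∀ i j, ContDiff ℝ ∞ fun w => g w i j := fun i j => (hsm i j).of_le (by simp)
  have hdet : ∀ w, (g w).det ≠ 0 := fun w => (hpos w).det_pos.ne'
  have hH : ∀ i j, ContDiff ℝ ∞ fun w => (g w)⁻¹ i j := smooth_inv_entry hsm' hdet
  have hH0 : ∀ i j, (g 0)⁻¹ i j = if i = j then (1:ℂ) else 0 := by
    intro i j; rw [hnorm0, inv_one, Matrix.one_apply]
  have hg0 : ∀ i j, g 0 i j = if i = j then (1:ℂ) else 0 := by
    intro i j; rw [hnorm0, Matrix.one_apply]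
  have hmul : ∀ a b : Fin n, (fun w => ∑ k, g w a k * (g w)⁻¹ k b)
      = fun _ => if a = b then (1:ℂ) else 0 := by
    intro a b; funext w
    rw [← Matrix.mul_apply, Matrix.mul_nonsing_inv _ (Ne.isUnit (hdet w)), Matrix.one_apply]
  have hH1 : ∀ i j k, dz k (fun w => (g w)⁻¹ i j) 0 = 0 := by
    intro i j k
    have h0 : dz k (fun w => ∑ l, g w i l * (g w)⁻¹ l j) 0 = 0 := by
      rw [hmul i j, dz_const]
    rw [dz_sum k Finset.univ (fun l _ => (hsm' i l).mul (hH l j)) 0] at h0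
    have hexp : ∀ l : Fin n, dz k (fun w => g w i l * (g w)⁻¹ l j) 0
        = dz k (fun w => g w i l) 0 * (g 0)⁻¹ l j
          + g 0 i l * dz k (fun w => (g w)⁻¹ l j) 0 :=
      fun l => dz_mul k (hsm' i l) (hH l j) 0
    simp only [hexp, hnorm1, zero_mul, zero_add, hg0, ite_mul, one_mul,
      Finset.sum_ite_eq, Finset.mem_univ, if_true] at h0
    exact h0
  have hH1' : ∀ i j k, dzbar k (fun w => (g w)⁻¹ i j) 0 = 0 := by
    intro i j k
    have h0 : dzbar k (fun w => ∑ l, g w i l * (g w)⁻¹ l j) 0 = 0 := by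
      rw [hmul i j, dzbar_const]
    rw [dzbar_sum k Finset.univ (fun l _ => (hsm' i l).mul (hH l j)) 0] at h0
    have hexp : ∀ l : Fin n, dzbar k (fun w => g w i l * (g w)⁻¹ l j) 0
        = dzbar k (fun w => g w i l) 0 * (g 0)⁻¹ l j
          + g 0 i l * dzbar k (fun w => (g w)⁻¹ l j) 0 :=
      fun l => dzbar_mul k (hsm' i l) (hH l j) 0
    simp only [hexp, hnorm1', zero_mul, zero_add, hg0, ite_mul, one_mul,
      Finset.sum_ite_eq, Finset.mem_univ, if_true] at h0
    exact h0
  have key : ∀ a b c d e : Fin n,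
      dz c (dzbar d (dz e (fun w => (g w)⁻¹ a b))) 0
        = - dz c (dzbar d (dz e (fun w => g w a b))) 0 := by
    intro a b c d e
    have h0 : dz c (dzbar d (dz e (fun w => ∑ k, g w a k * (g w)⁻¹ k b))) 0 = 0 := by
      rw [hmul a b, triple_const]
    rw [triple_sum c d e Finset.univ (fun k _ => (hsm' a k).mul (hH k b)) 0] at h0
    have hexp : ∀ k : Fin n, dz c (dzbar d (dz e (fun w => g w a k * (g w)⁻¹ k b))) 0
        = dz c (dzbar d (dz e (fun w => g w a k))) 0 * (g 0)⁻¹ k b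
          + dzbar d (dz e (fun w => g w a k)) 0 * dz c (fun w => (g w)⁻¹ k b) 0
          + dz c (dz e (fun w => g w a k)) 0 * dzbar d (fun w => (g w)⁻¹ k b) 0
          + dz e (fun w => g w a k) 0 * dz c (dzbar d (fun w => (g w)⁻¹ k b)) 0
          + dz c (dzbar d (fun w => g w a k)) 0 * dz e (fun w => (g w)⁻¹ k b) 0
          + dzbar d (fun w => g w a k) 0 * dz c (dz e (fun w => (g w)⁻¹ k b)) 0
          + dz c (fun w => g w a k) 0 * dzbar d (dz e (fun w => (g w)⁻¹ k b)) 0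
          + g 0 a k * dz c (dzbar d (dz e (fun w => (g w)⁻¹ k b))) 0 :=
      fun k => triple_mul c d e (hsm' a k) (hH k b) 0
    simp only [hexp, hnorm1, hnorm1', hH1, hH1', zero_mul, mul_zero, add_zero,
      zero_add] at h0
    simp only [hg0, hH0, mul_ite, ite_mul, mul_one, mul_zero, one_mul, zero_mul,
      Finset.sum_add_distrib, Finset.sum_ite_eq, Finset.sum_ite_eq', Finset.mem_univ,
      if_true] at h0
    linear_combination h0
  -- symmetries
  have K : ∀ k i j : Fin n, dz k (fun w => g w i j) = dz i (fun w => g w k j) :=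
    fun k i j => funext fun w => hkahler w i j k
  have herm : ∀ i j : Fin n,
      (fun w => g w i j) = fun w => (starRingEnd ℂ) (g w j i) :=
    fun i j => funext fun w => ((hpos w).1.apply i j).symm
  have Hm : ∀ a b d : Fin n,
      dzbar d (fun w => g w a b) = dzbar b (fun w => g w a d) := by
    intro a b d; funext w
    rw [herm a b, herm a d, dzbar_conj d (hsm' b a) w, dzbar_conj b (hsm' d a) w]
    exact congrArg _ (congrFun (K d b a) w)
  have BarSwapIn : ∀ a b d e : Fin n,
      dzbar d (dz e (fun w => g w a b)) = dzbar b (dz e (fun w => g w a d)) := by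
    intro a b d e
    rw [← dz_dzbar_comm e d _ (hsm' a b), ← dz_dzbar_comm e b _ (hsm' a d), Hm a b d]
  have SwapOI : ∀ (a d b : Fin n) (f : (Fin n → ℂ) → ℂ), ContDiff ℝ ∞ f →
      dz a (dzbar d (dz b f)) = dz b (dzbar d (dz a f)) := by
    intro a d b f hf
    rw [← dz_dzbar_comm b d f hf, ← dz_dzbar_comm a d f hf]
    rw [dz_dz_comm a b _ (smooth_dzbar d hf)]
  have E2 : dz α (dzbar δ (dz ε (fun w => g w γ β)))
      = dz γ (dzbar δ (dz ε (fun w => g w α β))) := by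
    rw [K ε γ β, K ε α β]
    exact SwapOI α δ γ _ (hsm' ε β)
  have E3 : dz α (dzbar δ (dz γ (fun w => g w ε β)))
      = dz γ (dzbar δ (dz ε (fun w => g w α β))) := by
    rw [K γ ε β]
    exact E2
  have E4 : dz γ (dzbar β (dz ε (fun w => g w α δ)))
      = dz γ (dzbar δ (dz ε (fun w => g w α β))) := by
    rw [BarSwapIn α δ β ε]
  have E5 : dz α (dzbar β (dz ε (fun w => g w γ δ)))
      = dz γ (dzbar δ (dz ε (fun w => g w α β))) := by
    rw [BarSwapIn γ δ β ε]
    exact E2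
  have E6 : dz α (dzbar β (dz γ (fun w => g w ε δ)))
      = dz γ (dzbar δ (dz ε (fun w => g w α β))) := by
    rw [BarSwapIn ε δ β γ]
    exact E3
  have h6 := hsymm α β γ δ ε
  rw [key α β γ δ ε, key γ β α δ ε, key ε β α δ γ, key α δ γ β ε, key γ δ α β ε,
    key ε δ α β γ] at h6
  rw [E2, E3, E4, E5, E6] at h6
  linear_combination (-1/6 : ℂ) * h6
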